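/- Let A, B be m×n real matrices. Then A Aᵀ = B Bᵀ if and only if there exists an orthogonal n×n real matrix V such that A = B V. -/

import Mathlib

/-!
`A Aᴴ = B Bᴴ` says exactly that `x ↦ Aᴴ x` and `x ↦ Bᴴ x` have the same norms. Hence
`Bᴴ x ↦ Aᴴ x` is a well-defined isometry on the range of `Bᴴ`; extended to the whole space it
becomes a unitary `W` with `Aᴴ = W Bᴴ`, that is `A = B Wᴴ`.
-/

open Matrix

open LinearMap in
theorem LinearMap.exists_comp_rangeRestrict_eq_of_ker_le {R M M₂ M₃ : Type*} [Ring R]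
    [AddCommGroup M] [Module R M] [AddCommGroup M₂] [Module R M₂] [AddCommGroup M₃] [Module R M₃]
    {f : M →ₗ[R] M₂} {g : M →ₗ[R] M₃} (h : ker f ≤ ker g) :
    ∃ g₀ : range f →ₗ[R] M₃, g₀ ∘ₗ f.rangeRestrict = g :=
  ⟨(ker f).liftQ g h ∘ₗ f.quotKerEquivRange.symm.toLinearMap, by
    ext x
    simp [show f.quotKerEquivRange.symm (f.rangeRestrict x) = (ker f).mkQ x from
      f.quotKerEquivRange_symm_apply_image x _]⟩

open LinearMap in
theorem LinearMap.exists_linearIsometry_comp_eq_of_norm_map_eq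
    {𝕜 E F : Type*} [RCLike 𝕜] [AddCommGroup E] [Module 𝕜 E]
    [NormedAddCommGroup F] [InnerProductSpace 𝕜 F] [FiniteDimensional 𝕜 F]
    {S T : E →ₗ[𝕜] F} (h : ∀ x, ‖T x‖ = ‖S x‖) :
    ∃ U : F →ₗᵢ[𝕜] F, U.toLinearMap ∘ₗ S = T := by
  have hker : ker S ≤ ker T := fun x hx => by
    rw [mem_ker, ← norm_eq_zero, h, norm_eq_zero, ← mem_ker]
    exact hx
  obtain ⟨T₀, hT₀⟩ := exists_comp_rangeRestrict_eq_of_ker_le hker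
  have hT₀x (x : E) : T₀ (S.rangeRestrict x) = T x := congr($hT₀ x)
  have norm_T₀ : ∀ y, ‖T₀ y‖ = ‖y‖ := by
    rintro ⟨_, x, rfl⟩
    exact (congrArg norm (hT₀x x)).trans (h x)
  refine ⟨LinearIsometry.extend ⟨T₀, norm_T₀⟩, LinearMap.ext fun x => ?_⟩
  simpa using (LinearIsometry.extend_apply ⟨T₀, norm_T₀⟩ (S.rangeRestrict x)).trans (hT₀x x)

namespace Matrix

variable {m n 𝕜 : Type*} [Fintype m] [DecidableEq m] [Fintype n] [DecidableEq n] [RCLike 𝕜]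

theorem norm_toEuclideanLin_conjTranspose_sq (A : Matrix m n 𝕜) (x : EuclideanSpace 𝕜 m) :
    ‖toEuclideanLin Aᴴ x‖ ^ 2 = RCLike.re (inner 𝕜 x (toEuclideanLin (A * Aᴴ) x)) := by
  have hA : toEuclideanLin A = (toEuclideanLin Aᴴ).adjoint := by
    rw [← toEuclideanLin_conjTranspose_eq_adjoint, conjTranspose_conjTranspose]
  rw [toLpLin_mul_same, LinearMap.comp_apply, hA, LinearMap.adjoint_inner_right,
    inner_self_eq_norm_sq]

theorem mem_unitaryGroup_of_toEuclideanLin_eq {U : Matrix n n 𝕜}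
    (L : EuclideanSpace 𝕜 n →ₗᵢ[𝕜] EuclideanSpace 𝕜 n) (hL : toEuclideanLin U = L) :
    U ∈ unitaryGroup n 𝕜 := by
  rw [mem_unitaryGroup_iff', star_eq_conjTranspose]
  apply (toEuclideanLin (𝕜 := 𝕜)).injective
  rw [toLpLin_mul_same, toEuclideanLin_conjTranspose_eq_adjoint, hL, toLpLin_one]
  exact L.adjoint_comp_self'

theorem exists_mem_unitaryGroup_of_mul_conjTranspose_eq {A B : Matrix m n 𝕜}
    (h : A * Aᴴ = B * Bᴴ) : ∃ V ∈ unitaryGroup n 𝕜, A = B * V := by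
  have norm_eq (x : EuclideanSpace 𝕜 m) : ‖toEuclideanLin Aᴴ x‖ = ‖toEuclideanLin Bᴴ x‖ := by
    rw [← sq_eq_sq₀ (norm_nonneg _) (norm_nonneg _), norm_toEuclideanLin_conjTranspose_sq,
      norm_toEuclideanLin_conjTranspose_sq, h]
  obtain ⟨U, hU⟩ := LinearMap.exists_linearIsometry_comp_eq_of_norm_map_eq norm_eq
  set W := toEuclideanLin.symm U.toLinearMap
  have hW : toEuclideanLin W = U.toLinearMap := toEuclideanLin.apply_symm_apply _
  refine ⟨Wᴴ, Unitary.star_mem (mem_unitaryGroup_of_toEuclideanLin_eq U hW), ?_⟩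
  rw [← conjTranspose_inj, conjTranspose_mul, conjTranspose_conjTranspose]
  apply (toEuclideanLin (𝕜 := 𝕜)).injective
  rw [toLpLin_mul_same, hW, hU]

theorem mul_conjTranspose_eq_iff_exists_mem_unitaryGroup {A B : Matrix m n 𝕜} :
    A * Aᴴ = B * Bᴴ ↔ ∃ V ∈ unitaryGroup n 𝕜, A = B * V := by
  refine ⟨exists_mem_unitaryGroup_of_mul_conjTranspose_eq, ?_⟩
  rintro ⟨V, hV, rfl⟩
  rw [conjTranspose_mul, Matrix.mul_assoc, ← Matrix.mul_assoc V, ← star_eq_conjTranspose,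
    mem_unitaryGroup_iff.mp hV, Matrix.one_mul]

end Matrix

theorem mul_transpose_eq_iff_exists_orthogonal (m n : ℕ)
    (A B : Matrix (Fin m) (Fin n) ℝ) :
    A * Aᵀ = B * Bᵀ ↔
      ∃ V : Matrix (Fin n) (Fin n) ℝ, V * Vᵀ = 1 ∧ Vᵀ * V = 1 ∧ A = B * V := by
  rw [← conjTranspose_eq_transpose_of_trivial A, ← conjTranspose_eq_transpose_of_trivial B,
    mul_conjTranspose_eq_iff_exists_mem_unitaryGroup]
  simp only [unitaryGroup, Unitary.mem_iff, star_eq_conjTranspose,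
    conjTranspose_eq_transpose_of_trivial, and_assoc]
  exact exists_congr fun _ => and_left_comm
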